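/- arXiv:2505.21694 — 5 statements merged into one kernel-verified Lean document; each statement's English description precedes it below -/
import Mathlib

section
/- Let G be a graph with m edges and S ⊆ V(G). If the induced subgraph G[S] has a bisection of size at least e(G[S])/2 + x, then G has a bisection of size at least m/2 + x − 2√m. -/
/-!
Put `T = V \ S` and extend the bisection `(A₁, B₁)` of `S` by taking the vertices of `T` two at
a time and placing them on opposite sides, in the better of the two orientations (a last odd
vertex goes to the better side). Averaging over the orientations shows that the cut never falls
below its expectation under a uniformly random extension, which is at least `m/2 + x` by the
hypothesis on `(A₁, B₁)`. The sides now differ by at most two; if they do, moving the vertex of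
the larger side `A` with fewest neighbours `d` across costs `d`, and `d² ≤ |A| d ≤ e(A, B) ≤ m`.
-/

open Finset SimpleGraph

/-- `epairs G A B` is the number of ordered pairs `(u,v) ∈ A × B` with `u ~ v`.
For disjoint `A`, `B` this is the number of edges between `A` and `B`;
`epairs G S S` is twice the number of edges inside `S`. -/
def epairs {V : Type*} [DecidableEq V] (G : SimpleGraph V) [DecidableRel G.Adj]
    (A B : Finset V) : ℕ :=
  ((A ×ˢ B).filter fun p => G.Adj p.1 p.2).card

namespace epairs

variable {V : Type*} [DecidableEq V] (G : SimpleGraph V) [DecidableRel G.Adj]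

lemma comm (A B : Finset V) : epairs G A B = epairs G B A :=
  card_bij' (fun p _ => p.swap) (fun p _ => p.swap) (by simp [G.adj_comm, and_comm])
    (by simp [G.adj_comm, and_comm]) (by simp) (by simp)

@[simp] lemma empty_left (B : Finset V) : epairs G ∅ B = 0 := by simp [epairs]

lemma union_left {A A' : Finset V} (B : Finset V) (h : Disjoint A A') :
    epairs G (A ∪ A') B = epairs G A B + epairs G A' B := by
  rw [epairs, union_product, filter_union, card_union_of_disjoint]
  · rfl
  · exact disjoint_filter_filter (disjoint_product.2 (Or.inl h))

lemma union_right (A : Finset V) {B B' : Finset V} (h : Disjoint B B') :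
    epairs G A (B ∪ B') = epairs G A B + epairs G A B' := by
  rw [comm, union_left G A h, comm G B, comm G B']

lemma insert_left {u : V} {A : Finset V} (B : Finset V) (h : u ∉ A) :
    epairs G (insert u A) B = epairs G {u} B + epairs G A B := by
  rw [insert_eq, union_left G B (disjoint_singleton_left.2 h)]

lemma insert_right (A : Finset V) {v : V} {B : Finset V} (h : v ∉ B) :
    epairs G A (insert v B) = epairs G {v} A + epairs G A B := by
  rw [insert_eq, union_right G A (disjoint_singleton_left.2 h), comm G A {v}]

lemma singleton_left (u : V) (B : Finset V) :
    epairs G {u} B = (B.filter (G.Adj u)).card := by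
  rw [epairs, singleton_product, filter_map, card_map]
  rfl

@[simp] lemma singleton_self (u : V) : epairs G {u} {u} = 0 := by
  simp [singleton_left]

lemma singleton_le_card (u : V) (B : Finset V) : epairs G {u} B ≤ #B := by
  rw [singleton_left]
  exact card_filter_le _ _

lemma mono {A A' B B' : Finset V} (hA : A ⊆ A') (hB : B ⊆ B') :
    epairs G A B ≤ epairs G A' B' :=
  card_le_card (filter_subset_filter _ (product_subset_product hA hB))

lemma eq_sum_singleton (A B : Finset V) : epairs G A B = ∑ a ∈ A, epairs G {a} B := by
  induction A using Finset.induction with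
  | empty => simp
  | insert a s h ih => rw [insert_left G B h, ih, sum_insert h]

lemma union_self {S T : Finset V} (h : Disjoint S T) :
    epairs G (S ∪ T) (S ∪ T) = epairs G S S + 2 * epairs G T S + epairs G T T := by
  rw [union_left G _ h, union_right G _ h, union_right G _ h, comm G S T]
  ring

variable [Fintype V]

lemma univ_univ : epairs G univ univ = 2 * #G.edgeFinset := by
  rw [eq_sum_singleton, ← sum_degrees_eq_twice_card_edges]
  refine sum_congr rfl fun u _ => ?_
  rw [singleton_left, ← neighborFinset_eq_filter, card_neighborFinset_eq_degree]

lemma le_card_edgeFinset {A B : Finset V} (h : Disjoint A B) :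
    epairs G A B ≤ #G.edgeFinset := by
  have := mono G (subset_univ (A ∪ B)) (subset_univ (A ∪ B))
  rw [union_self G h, univ_univ, comm G B A] at this
  omega

end epairs

section Extension

variable {V : Type*} [DecidableEq V] (G : SimpleGraph V) [DecidableRel G.Adj]

/-- Four times the expected cut between `A ∪ T₁` and `B ∪ T₂` when every vertex of `T` joins
`T₁` or `T₂` independently with probability `1/2`. -/
def splitPotential (A B T : Finset V) : ℕ :=
  4 * epairs G A B + 2 * epairs G T A + 2 * epairs G T B + epairs G T T

lemma splitPotential_insert_add {w : V} {A B T : Finset V} (hA : w ∉ A) (hB : w ∉ B)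
    (hT : w ∉ T) :
    splitPotential G (insert w A) B T + splitPotential G A (insert w B) T
      = 2 * splitPotential G A B (insert w T) := by
  simp only [splitPotential, epairs.insert_left G _ hA, epairs.insert_left G _ hT,
    epairs.insert_right G _ hA, epairs.insert_right G _ hB, epairs.insert_right G _ hT,
    epairs.singleton_self]
  ring

lemma splitPotential_insert_insert_add {u v : V} {A B T : Finset V} (huv : u ≠ v)
    (hu : u ∉ A ∪ B ∪ T) (hv : v ∉ A ∪ B ∪ T) :
    splitPotential G (insert u A) (insert v B) T + splitPotential G (insert v A) (insert u B) T
      = 2 * splitPotential G A B (insert u (insert v T)) + 4 * epairs G {u} {v} := by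
  simp only [mem_union, not_or] at hu hv
  have hu' : u ∉ insert v T := by simp [huv, hu.2]
  simp only [splitPotential, epairs.insert_left G _ hu.1.1, epairs.insert_left G _ hv.1.1,
    epairs.insert_left G _ hu', epairs.insert_left G _ hv.2,
    epairs.insert_right G _ hu.1.2, epairs.insert_right G _ hv.1.2,
    epairs.insert_right G _ hu.1.1, epairs.insert_right G _ hv.1.1,
    epairs.insert_right G _ hu', epairs.insert_right G _ hv.2, epairs.singleton_self,
    epairs.comm G {v} {u}]
  ring

lemma splitPotential_empty (A B : Finset V) : splitPotential G A B ∅ = 4 * epairs G A B := by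
  simp [splitPotential]

def IsGoodExtension (A B T A' B' : Finset V) : Prop :=
  A' ∪ B' = A ∪ B ∪ T ∧ Disjoint A' B' ∧ |((#A' : ℤ) - #B') - ((#A : ℤ) - #B)| ≤ 1 ∧
    splitPotential G A B T ≤ 4 * epairs G A' B'

lemma isGoodExtension_empty {A B : Finset V} (hAB : Disjoint A B) :
    IsGoodExtension G A B ∅ A B :=
  ⟨by simp, hAB, by simp, (splitPotential_empty G A B).le⟩

lemma exists_isGoodExtension_singleton {u : V} {A B : Finset V} (hAB : Disjoint A B)
    (hA : u ∉ A) (hB : u ∉ B) : ∃ A' B', IsGoodExtension G A B {u} A' B' := by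
  have hsum := splitPotential_insert_add G hA hB (notMem_empty u)
  simp only [splitPotential_empty, insert_empty] at hsum
  rcases le_total (epairs G (insert u A) B) (epairs G A (insert u B)) with h | h
  · refine ⟨A, insert u B, by simp [union_comm], disjoint_insert_right.2 ⟨hA, hAB⟩, ?_, by omega⟩
    simp [card_insert_of_notMem hB]
  · refine ⟨insert u A, B, by simp [union_comm], disjoint_insert_left.2 ⟨hB, hAB⟩, ?_, by omega⟩
    simp [card_insert_of_notMem hA]

lemma IsGoodExtension.insert_insert {u v : V} {A B T A' B' : Finset V} (hA : u ∉ A) (hB : v ∉ B)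
    (h : IsGoodExtension G (insert u A) (insert v B) T A' B')
    (hle : splitPotential G A B (insert u (insert v T))
      ≤ splitPotential G (insert u A) (insert v B) T) :
    IsGoodExtension G A B (insert u (insert v T)) A' B' := by
  obtain ⟨hU, hD, hC, hP⟩ := h
  refine ⟨?_, hD, ?_, hle.trans hP⟩
  · rw [hU]
    ext w
    simp only [mem_union, mem_insert]
    tauto
  · rw [card_insert_of_notMem hA, card_insert_of_notMem hB] at hC
    push_cast at hC
    convert hC using 2
    ring

lemma exists_isGoodExtension (T : Finset V) {A B : Finset V} (hAB : Disjoint A B)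
    (hT : Disjoint (A ∪ B) T) : ∃ A' B', IsGoodExtension G A B T A' B' := by
  induction T using Finset.strongInduction generalizing A B with
  | H T ih =>
  rcases T.eq_empty_or_nonempty with rfl | ⟨u, hu⟩
  · exact ⟨A, B, isGoodExtension_empty G hAB⟩
  rcases (T.erase u).eq_empty_or_nonempty with hTu | ⟨v, hv⟩
  · obtain rfl : T = {u} := ((erase_eq_empty_iff T u).1 hTu).resolve_left (ne_empty_of_mem hu)
    simp only [disjoint_singleton_right, mem_union, not_or] at hT
    exact exists_isGoodExtension_singleton G hAB hT.1 hT.2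
  obtain ⟨T', hu', hv', rfl⟩ : ∃ T', u ∉ T' ∧ v ∉ T' ∧ T = insert u (insert v T') :=
    ⟨(T.erase u).erase v, by simp, by simp, by rw [insert_erase hv, insert_erase hu]⟩
  have huv : u ≠ v := (ne_of_mem_erase hv).symm
  have hsub : T' ⊂ insert u (insert v T') :=
    (ssubset_insert hv').trans_subset (subset_insert u _)
  simp only [disjoint_insert_right, mem_union, not_or] at hT
  have hsum := splitPotential_insert_insert_add G huv (A := A) (B := B) (T := T')
    (by simp [hT.1.1, hT.1.2, hu']) (by simp [hT.2.1.1, hT.2.1.2, hv'])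
  have hdisj {a b : V} (hab : a ≠ b) (ha : a ∉ A ∧ a ∉ B) (hb : b ∉ A ∧ b ∉ B) (haT : a ∉ T')
      (hbT : b ∉ T') : Disjoint (insert a A) (insert b B) ∧ Disjoint (insert a A ∪ insert b B) T' :=
    ⟨by simp [disjoint_insert_left, disjoint_insert_right, hab.symm, ha.2, hb.1, hAB],
      by simp [disjoint_insert_left, haT, hbT, hT.2.2]⟩
  rcases le_total (splitPotential G A B (insert u (insert v T')))
    (splitPotential G (insert u A) (insert v B) T') with h | h
  · obtain ⟨A', B', hext⟩ := ih T' hsub (hdisj huv hT.1 hT.2.1 hu' hv').1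
      (hdisj huv hT.1 hT.2.1 hu' hv').2
    exact ⟨A', B', hext.insert_insert G hT.1.1 hT.2.1.2 h⟩
  · obtain ⟨A', B', hext⟩ := ih T' hsub (hdisj huv.symm hT.2.1 hT.1 hv' hu').1
      (hdisj huv.symm hT.2.1 hT.1 hv' hu').2
    rw [insert_comm] at hsum h ⊢
    exact ⟨A', B', hext.insert_insert G hT.2.1.1 hT.1.2 (by omega)⟩

end Extension

section Bisection

variable {V : Type*} [Fintype V] [DecidableEq V] (G : SimpleGraph V) [DecidableRel G.Adj]

lemma splitPotential_compl_add_epairs {A B : Finset V} (hAB : Disjoint A B) :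
    splitPotential G A B (A ∪ B)ᶜ + epairs G (A ∪ B) (A ∪ B)
      = 4 * epairs G A B + 2 * #G.edgeFinset := by
  have hall := epairs.union_self G (disjoint_compl_right (a := A ∪ B))
  rw [union_compl, epairs.univ_univ] at hall
  have hcross := epairs.union_right G (A ∪ B)ᶜ hAB
  rw [splitPotential]
  omega

lemma exists_mem_epairs_sq_le {A B : Finset V} (hAB : Disjoint A B) (hA : A.Nonempty)
    (hcard : #B ≤ #A) : ∃ a ∈ A, epairs G {a} B ^ 2 ≤ #G.edgeFinset := by
  obtain ⟨a, ha, hmin⟩ := exists_min_image A (fun a => epairs G {a} B) hA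
  refine ⟨a, ha, ?_⟩
  have hsum : #A * epairs G {a} B ≤ epairs G A B := by
    rw [epairs.eq_sum_singleton G A B, ← smul_eq_mul, ← sum_const]
    exact sum_le_sum hmin
  calc epairs G {a} B ^ 2 ≤ #A * epairs G {a} B := by
        rw [sq]; exact Nat.mul_le_mul_right _ ((epairs.singleton_le_card G a B).trans hcard)
    _ ≤ #G.edgeFinset := hsum.trans (epairs.le_card_edgeFinset G hAB)

lemma exists_balanced_of_card_eq_add_two {A B : Finset V} (hAB : Disjoint A B)
    (hcard : #A = #B + 2) :
    ∃ A' B' : Finset V, A' ∪ B' = A ∪ B ∧ Disjoint A' B' ∧ #A' = #B' ∧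
      (epairs G A B : ℝ) ≤ epairs G A' B' + √(#G.edgeFinset : ℝ) := by
  obtain ⟨a, ha, hsq⟩ := exists_mem_epairs_sq_le G hAB (card_pos.1 (by omega)) (by omega)
  have haB : a ∉ B := disjoint_left.1 hAB ha
  refine ⟨A.erase a, insert a B, ?_, ?_, ?_, ?_⟩
  · rw [union_insert, ← insert_union, insert_erase ha]
  · exact disjoint_insert_right.2 ⟨notMem_erase a A, hAB.mono_left (erase_subset a A)⟩
  · rw [card_erase_of_mem ha, card_insert_of_notMem haB]
    omega
  · have hsplit : epairs G A B ≤ epairs G {a} B + epairs G (A.erase a) (insert a B) := by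
      conv_lhs => rw [← insert_erase ha, epairs.insert_left G B (notMem_erase a A)]
      exact Nat.add_le_add_left (epairs.mono G subset_rfl (subset_insert a B)) _
    have hroot : (epairs G {a} B : ℝ) ≤ √(#G.edgeFinset : ℝ) :=
      Real.le_sqrt_of_sq_le (by exact_mod_cast hsq)
    have : (epairs G A B : ℝ) ≤ epairs G {a} B + epairs G (A.erase a) (insert a B) := by
      exact_mod_cast hsplit
    linarith

lemma exists_bisection_of_abs_card_sub_le_two {A B : Finset V} (hAB : Disjoint A B)
    (hcard : |(#A : ℤ) - #B| ≤ 2) :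
    ∃ A' B' : Finset V, A' ∪ B' = A ∪ B ∧ Disjoint A' B' ∧ |(#A' : ℤ) - #B'| ≤ 1 ∧
      (epairs G A B : ℝ) ≤ epairs G A' B' + √(#G.edgeFinset : ℝ) := by
  by_cases h : |(#A : ℤ) - #B| ≤ 1
  · exact ⟨A, B, rfl, hAB, h, le_add_of_nonneg_right (Real.sqrt_nonneg _)⟩
  rw [abs_le] at hcard h
  rcases (by omega : #A = #B + 2 ∨ #B = #A + 2) with hAB2 | hBA2
  · obtain ⟨A', B', hU, hD, hC, hP⟩ := exists_balanced_of_card_eq_add_two G hAB hAB2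
    exact ⟨A', B', hU, hD, by simp [hC], hP⟩
  · obtain ⟨B', A', hU, hD, hC, hP⟩ := exists_balanced_of_card_eq_add_two G hAB.symm hBA2
    refine ⟨A', B', by rw [union_comm, hU, union_comm], hD.symm, by simp [hC], ?_⟩
    rwa [epairs.comm G B, epairs.comm G B'] at hP

end Bisection

/-- If the induced subgraph `G[S]` has a bisection of size at least `e(G[S])/2 + x`,
then `G` has a bisection of size at least `m/2 + x − 2√m`. -/
theorem stmt_2 {V : Type*} [Fintype V] [DecidableEq V]
    (G : SimpleGraph V) [DecidableRel G.Adj] (S : Finset V) (x : ℝ)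
    (A₁ B₁ : Finset V) (hpart : A₁ ∪ B₁ = S) (hdisj : Disjoint A₁ B₁)
    (hbal : |(A₁.card : ℤ) - (B₁.card : ℤ)| ≤ 1)
    (hsize : (epairs G S S : ℝ) / 4 + x ≤ (epairs G A₁ B₁ : ℝ)) :
    ∃ A B : Finset V, A ∪ B = Finset.univ ∧ Disjoint A B ∧
      |(A.card : ℤ) - (B.card : ℤ)| ≤ 1 ∧
      (G.edgeFinset.card : ℝ) / 2 + x - 2 * Real.sqrt (G.edgeFinset.card)
        ≤ (epairs G A B : ℝ) := by
  subst hpart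
  obtain ⟨A, B, hU, hD, hC, hP⟩ := exists_isGoodExtension G _ hdisj disjoint_compl_right
  obtain ⟨A', B', hU', hD', hC', hP'⟩ := exists_bisection_of_abs_card_sub_le_two G hD (by
    rw [abs_le] at hbal hC ⊢
    constructor <;> linarith)
  refine ⟨A', B', by rw [hU', hU, union_compl], hD', hC', ?_⟩
  have hpot : (splitPotential G A₁ B₁ (A₁ ∪ B₁)ᶜ : ℝ) + epairs G (A₁ ∪ B₁) (A₁ ∪ B₁)
      = 4 * epairs G A₁ B₁ + 2 * #G.edgeFinset := by
    exact_mod_cast splitPotential_compl_add_epairs G hdisj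
  have hP : (splitPotential G A₁ B₁ (A₁ ∪ B₁)ᶜ : ℝ) ≤ 4 * epairs G A B := by exact_mod_cast hP
  linarith [Real.sqrt_nonneg (#G.edgeFinset : ℝ)]
end

section
/- Let G be a graph. Then the sum over all edges uv of G of d(u,v)/√(d(u)d(v)) is at most the sum over all vertices u of e(G[N(u)])/d(u), where d(u,v) = |N(u) ∩ N(v)| is the codegree of u and v. -/
open Finset SimpleGraph

lemma epairs_eq {V : Type*} [Fintype V] [DecidableEq V] (G : SimpleGraph V) [DecidableRel G.Adj]
    (A B : Finset V) : epairs G A B = ∑ a ∈ A, (B ∩ G.neighborFinset a).card := by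
  simp only [epairs, Finset.card_filter, Finset.sum_product]
  refine Finset.sum_congr rfl fun a _ => ?_
  rw [← Finset.card_filter]
  congr 1
  ext b
  simp [SimpleGraph.mem_neighborFinset, and_comm]

lemma sum_adj {V : Type*} [Fintype V] [DecidableEq V] (G : SimpleGraph V)
    [DecidableRel G.Adj] (f : V → V → ℝ) :
    ∑ p ∈ (Finset.univ ×ˢ Finset.univ).filter (fun p : V × V => G.Adj p.1 p.2), f p.1 p.2
      = ∑ u : V, ∑ v ∈ G.neighborFinset u, f u v := by
  rw [Finset.sum_filter, Finset.sum_product]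
  refine Finset.sum_congr rfl fun u _ => ?_
  rw [SimpleGraph.neighborFinset_eq_filter, Finset.sum_filter]

/-- The sum over all edges `uv` of `G` of `d(u,v)/√(d(u)d(v))` is at most the sum over
all vertices `u` of `e(G[N(u)])/d(u)`.  The sum over edges is written as half the sum
over ordered adjacent pairs, and `e(G[N(u)])` as `epairs G (N(u)) (N(u)) / 2`. -/
theorem stmt_4 {V : Type*} [Fintype V] [DecidableEq V]
    (G : SimpleGraph V) [DecidableRel G.Adj]
    (hiso : ∀ v : V, 0 < G.degree v) :
    (1 / 2 : ℝ) * ∑ p ∈ (Finset.univ ×ˢ Finset.univ).filter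
        (fun p : V × V => G.Adj p.1 p.2),
      ((G.neighborFinset p.1 ∩ G.neighborFinset p.2).card : ℝ) /
        Real.sqrt ((G.degree p.1 : ℝ) * (G.degree p.2 : ℝ))
    ≤ ∑ u : V, ((epairs G (G.neighborFinset u) (G.neighborFinset u) : ℝ) / 2) /
        (G.degree u : ℝ) := by
  have hd : ∀ v : V, (0 : ℝ) < (G.degree v : ℝ) := fun v => by exact_mod_cast hiso v
  set S := (Finset.univ ×ˢ Finset.univ).filter (fun p : V × V => G.Adj p.1 p.2) with hS
  set c : V → V → ℝ := fun u v => ((G.neighborFinset u ∩ G.neighborFinset v).card : ℝ)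
    with hc
  have hcsym : ∀ u v, c u v = c v u := fun u v => by
    simp [hc, Finset.inter_comm]
  -- rewrite RHS
  have hRHS : ∑ u : V, ((epairs G (G.neighborFinset u) (G.neighborFinset u) : ℝ) / 2) /
        (G.degree u : ℝ)
      = (1 / 2 : ℝ) * ∑ p ∈ S, c p.1 p.2 / (G.degree p.1 : ℝ) := by
    rw [hS, sum_adj G (fun u v => c u v / (G.degree u : ℝ)), Finset.mul_sum]
    refine Finset.sum_congr rfl fun u _ => ?_
    have : (epairs G (G.neighborFinset u) (G.neighborFinset u) : ℝ)
        = ∑ v ∈ G.neighborFinset u, c u v := by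
      rw [epairs_eq]
      push_cast
      exact Finset.sum_congr rfl fun v _ => by simp [hc, Finset.inter_comm]
    rw [this, Finset.sum_div, Finset.sum_div, Finset.mul_sum]
    refine Finset.sum_congr rfl fun v _ => by ring
  rw [hRHS]
  -- pointwise AM-GM bound then symmetry
  have key : ∑ p ∈ S, c p.1 p.2 / Real.sqrt ((G.degree p.1 : ℝ) * (G.degree p.2 : ℝ))
      ≤ ∑ p ∈ S, c p.1 p.2 / (G.degree p.1 : ℝ) := by
    have step1 : ∑ p ∈ S, c p.1 p.2 / Real.sqrt ((G.degree p.1 : ℝ) * (G.degree p.2 : ℝ))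
        ≤ ∑ p ∈ S, (c p.1 p.2 / (2 * (G.degree p.1 : ℝ))
            + c p.1 p.2 / (2 * (G.degree p.2 : ℝ))) := by
      refine Finset.sum_le_sum fun p _ => ?_
      have ha := hd p.1
      have hb := hd p.2
      have hcnn : (0 : ℝ) ≤ c p.1 p.2 := by positivity
      have hsqrt : (G.degree p.1 : ℝ) * (G.degree p.2 : ℝ)
          = Real.sqrt (G.degree p.1 : ℝ) ^ 2 * Real.sqrt (G.degree p.2 : ℝ) ^ 2 := by
        rw [Real.sq_sqrt ha.le, Real.sq_sqrt hb.le]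
      have h2 : 2 * (Real.sqrt (G.degree p.1 : ℝ) * Real.sqrt (G.degree p.2 : ℝ))
          ≤ (G.degree p.1 : ℝ) + (G.degree p.2 : ℝ) := by
        nlinarith [sq_nonneg (Real.sqrt (G.degree p.1 : ℝ) - Real.sqrt (G.degree p.2 : ℝ)),
          Real.sq_sqrt ha.le, Real.sq_sqrt hb.le]
      have hsp : Real.sqrt ((G.degree p.1 : ℝ) * (G.degree p.2 : ℝ))
          = Real.sqrt (G.degree p.1 : ℝ) * Real.sqrt (G.degree p.2 : ℝ) :=
        Real.sqrt_mul ha.le _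
      have hsppos : (0:ℝ) < Real.sqrt (G.degree p.1 : ℝ) * Real.sqrt (G.degree p.2 : ℝ) := by
        positivity
      rw [hsp, div_add_div _ _ (by positivity) (by positivity),
        div_le_div_iff₀ hsppos (by positivity)]
      nlinarith [mul_le_mul_of_nonneg_left (mul_le_mul_of_nonneg_right h2 hsppos.le) hcnn,
        hsqrt, hcnn, hsppos, Real.sq_sqrt ha.le, Real.sq_sqrt hb.le,
        mul_nonneg hcnn hsppos.le]
    have hswap : ∑ p ∈ S, c p.1 p.2 / (2 * (G.degree p.2 : ℝ))
        = ∑ p ∈ S, c p.1 p.2 / (2 * (G.degree p.1 : ℝ)) := by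
      refine Finset.sum_nbij' (fun p => Prod.swap p) (fun p => Prod.swap p) ?_ ?_ ?_ ?_ ?_
      · intro p hp
        simp only [hS, Finset.mem_filter] at hp ⊢
        exact ⟨by simp, hp.2.symm⟩
      · intro p hp
        simp only [hS, Finset.mem_filter] at hp ⊢
        exact ⟨by simp, hp.2.symm⟩
      · intro p _; simp
      · intro p _; simp
      · intro p _
        simp only [Prod.fst_swap, Prod.snd_swap]
        rw [hcsym p.2 p.1]
    calc ∑ p ∈ S, c p.1 p.2 / Real.sqrt ((G.degree p.1 : ℝ) * (G.degree p.2 : ℝ))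
        ≤ ∑ p ∈ S, (c p.1 p.2 / (2 * (G.degree p.1 : ℝ))
            + c p.1 p.2 / (2 * (G.degree p.2 : ℝ))) := step1
      _ = ∑ p ∈ S, c p.1 p.2 / (2 * (G.degree p.1 : ℝ))
            + ∑ p ∈ S, c p.1 p.2 / (2 * (G.degree p.2 : ℝ)) := Finset.sum_add_distrib
      _ = ∑ p ∈ S, c p.1 p.2 / (G.degree p.1 : ℝ) := by
          rw [hswap, ← Finset.sum_add_distrib]
          refine Finset.sum_congr rfl fun p _ => ?_
          field_simp
          ring
  exact mul_le_mul_of_nonneg_left key (by norm_num)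
end

section
/- Let G be a graph with n vertices and maximum degree Δ. Then the sum over all unordered pairs {u,v} of distinct vertices of d(u,v)/√(d(u)d(v)) is at most n(Δ−1)/2, where d(u,v) = |N(u) ∩ N(v)|. -/
/-!
By AM-GM, `d(u,v)/√(d(u)d(v)) ≤ (d(u,v)/d(u) + d(u,v)/d(v))/2`, so by the symmetry of the
codegree the sum is at most `∑_u ∑_{v ≠ u} d(u,v)/d(u)`. Counting paths `u - w - v` gives
`∑_{v ≠ u} d(u,v) = ∑_{w ∼ u} (d(w) - 1) ≤ d(u)(Δ - 1)`, so every vertex contributes at most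
`Δ - 1`.
-/

open Finset SimpleGraph

theorem div_sqrt_mul_le_half_add {a b c : ℝ} (ha : 0 < a) (hb : 0 < b) (hc : 0 ≤ c) :
    c / √(a * b) ≤ (c / a + c / b) / 2 := by
  calc c / √(a * b) = c * ((√a)⁻¹ * (√b)⁻¹) := by rw [Real.sqrt_mul ha.le]; ring
    _ ≤ c * (((√a)⁻¹ ^ 2 + (√b)⁻¹ ^ 2) / 2) := by
      gcongr; linarith [two_mul_le_add_sq (√a)⁻¹ (√b)⁻¹]
    _ = (c / a + c / b) / 2 := by
      rw [inv_pow, inv_pow, Real.sq_sqrt ha.le, Real.sq_sqrt hb.le]; ring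

theorem Finset.sum_offDiag_swap {α M : Type*} [AddCommMonoid M] (s : Finset α) (f : α × α → M) :
    ∑ p ∈ s.offDiag, f p.swap = ∑ p ∈ s.offDiag, f p := by
  have swap_mem : ∀ p ∈ s.offDiag, p.swap ∈ s.offDiag := fun p hp => by
    obtain ⟨h₁, h₂, hne⟩ := mem_offDiag.1 hp
    exact mem_offDiag.2 ⟨h₂, h₁, hne.symm⟩
  exact sum_nbij' Prod.swap Prod.swap swap_mem swap_mem (by simp) (by simp) fun _ _ => rfl

theorem Finset.sum_offDiag_eq_sum_sum_erase {α M : Type*} [DecidableEq α]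
    [AddCommMonoid M] (s : Finset α) (f : α → α → M) :
    ∑ p ∈ s.offDiag, f p.1 p.2 = ∑ a ∈ s, ∑ b ∈ s.erase a, f a b :=
  sum_finset_product' _ _ _ fun p => by simp [mem_offDiag, ne_comm, and_comm]

theorem Finset.sum_offDiag_div_sqrt_mul_le {α : Type*} (s : Finset α) {c : α → α → ℝ}
    (hc_symm : ∀ a b, c a b = c b a) (hc : ∀ a b, 0 ≤ c a b) {d : α → ℝ}
    (hd : ∀ a, 0 < d a) :
    ∑ p ∈ s.offDiag, c p.1 p.2 / √(d p.1 * d p.2) ≤ ∑ p ∈ s.offDiag, c p.1 p.2 / d p.1 := by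
  have hswap : ∑ p ∈ s.offDiag, c p.1 p.2 / d p.2 = ∑ p ∈ s.offDiag, c p.1 p.2 / d p.1 := by
    rw [← s.sum_offDiag_swap]
    simp only [Prod.fst_swap, Prod.snd_swap, hc_symm]
  calc ∑ p ∈ s.offDiag, c p.1 p.2 / √(d p.1 * d p.2)
      ≤ ∑ p ∈ s.offDiag, (c p.1 p.2 / d p.1 + c p.1 p.2 / d p.2) / 2 :=
        sum_le_sum fun p _ => div_sqrt_mul_le_half_add (hd _) (hd _) (hc _ _)
    _ = ∑ p ∈ s.offDiag, c p.1 p.2 / d p.1 := by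
        rw [← sum_div, sum_add_distrib, hswap]; ring

namespace SimpleGraph

variable {V : Type*} [Fintype V] [DecidableEq V] (G : SimpleGraph V) [DecidableRel G.Adj]

def codegree (u v : V) : ℕ := #(G.neighborFinset u ∩ G.neighborFinset v)

theorem codegree_comm (u v : V) : G.codegree u v = G.codegree v u := by
  rw [codegree, inter_comm, codegree]

/-- Both sides count the paths `u - w - v` with `v ≠ u`. -/
theorem sum_codegree_eq (u : V) :
    ∑ v ∈ univ.erase u, G.codegree u v = ∑ w ∈ G.neighborFinset u, (G.degree w - 1) := by
  have above : ∀ v, bipartiteAbove G.Adj (G.neighborFinset u) v =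
      G.neighborFinset u ∩ G.neighborFinset v := fun v => by
    ext w; simp [bipartiteAbove, G.adj_comm v]
  have below : ∀ w, bipartiteBelow G.Adj (univ.erase u) w = (G.neighborFinset w).erase u :=
    fun w => by ext v; simp [bipartiteBelow, and_comm, G.adj_comm v]
  calc ∑ v ∈ univ.erase u, G.codegree u v
      = ∑ w ∈ G.neighborFinset u, #(bipartiteBelow G.Adj (univ.erase u) w) := by
        simp only [codegree, ← above, sum_card_bipartiteAbove_eq_sum_card_bipartiteBelow]
    _ = ∑ w ∈ G.neighborFinset u, (G.degree w - 1) := sum_congr rfl fun w hw => by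
        have hu : u ∈ G.neighborFinset w := by simpa [adj_comm] using hw
        rw [below, card_erase_of_mem hu, card_neighborFinset_eq_degree]

theorem sum_codegree_le (u : V) :
    ∑ v ∈ univ.erase u, G.codegree u v ≤ G.degree u * (G.maxDegree - 1) := by
  rw [sum_codegree_eq, ← card_neighborFinset_eq_degree, ← smul_eq_mul]
  exact sum_le_card_nsmul _ _ _ fun w _ => Nat.sub_le_sub_right (G.degree_le_maxDegree w) 1

end SimpleGraph

/-- The sum over all unordered pairs `{u,v}` of distinct vertices of
`d(u,v)/√(d(u)d(v))` is at most `n(Δ−1)/2`, where `d(u,v) = |N(u) ∩ N(v)|`.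
The sum over unordered pairs is written as half the sum over `univ.offDiag`. -/
theorem stmt_5 {V : Type*} [Fintype V] [DecidableEq V]
    (G : SimpleGraph V) [DecidableRel G.Adj]
    (hiso : ∀ v : V, 0 < G.degree v) :
    (1 / 2 : ℝ) * ∑ p ∈ Finset.univ.offDiag,
      ((G.neighborFinset p.1 ∩ G.neighborFinset p.2).card : ℝ) /
        Real.sqrt ((G.degree p.1 : ℝ) * (G.degree p.2 : ℝ))
    ≤ (Fintype.card V : ℝ) * ((G.maxDegree : ℝ) - 1) / 2 := by
  have hdeg : ∀ v, (0 : ℝ) < G.degree v := fun v => mod_cast hiso v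
  have hvertex : ∀ u, (∑ v ∈ univ.erase u, (G.codegree u v : ℝ)) / G.degree u ≤
      G.maxDegree - 1 := fun u => by
    have hΔ : 1 ≤ G.maxDegree := (hiso u).trans_le (G.degree_le_maxDegree u)
    rw [div_le_iff₀ (hdeg u), mul_comm, ← Nat.cast_one, ← Nat.cast_sub hΔ]
    exact_mod_cast G.sum_codegree_le u
  calc (1 / 2 : ℝ) * ∑ p ∈ univ.offDiag,
        (G.codegree p.1 p.2 : ℝ) / √((G.degree p.1 : ℝ) * G.degree p.2)
      ≤ 1 / 2 * ∑ p ∈ univ.offDiag, (G.codegree p.1 p.2 : ℝ) / G.degree p.1 := by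
        gcongr 1 / 2 * ?_
        exact univ.sum_offDiag_div_sqrt_mul_le (fun u v => mod_cast G.codegree_comm u v)
          (fun _ _ => Nat.cast_nonneg _) hdeg
    _ = 1 / 2 * ∑ u, (∑ v ∈ univ.erase u, (G.codegree u v : ℝ)) / G.degree u := by
        simp only [univ.sum_offDiag_eq_sum_sum_erase
          (fun u v => (G.codegree u v : ℝ) / G.degree u), sum_div]
    _ ≤ 1 / 2 * ∑ _u : V, ((G.maxDegree : ℝ) - 1) := by gcongr with u; exact hvertex u
    _ = Fintype.card V * ((G.maxDegree : ℝ) - 1) / 2 := by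
        rw [sum_const, card_univ, nsmul_eq_mul]; ring
end

section
/- Let k ≥ 2 and let G be a C_{2k}-free graph. Then for every vertex v of G, the subgraph induced by the neighborhood of v contains no path with 2k−2 edges, and consequently e(G[N(v)]) ≤ k·d(v). -/
open Finset SimpleGraph

section epairs

variable {V : Type*} [DecidableEq V] {G : SimpleGraph V} [DecidableRel G.Adj]

lemma epairs_comm (A B : Finset V) : epairs G A B = epairs G B A :=
  card_nbij' Prod.swap Prod.swap (fun _ => by simp +contextual [G.adj_comm])
    (fun _ => by simp +contextual [G.adj_comm]) (fun _ _ => rfl) (fun _ _ => rfl)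

lemma epairs_union_left {A A' : Finset V} (h : Disjoint A A') (B : Finset V) :
    epairs G (A ∪ A') B = epairs G A B + epairs G A' B := by
  rw [epairs, union_product, filter_union, card_union_of_disjoint
    (disjoint_filter_filter (disjoint_product.mpr (Or.inl h)))]
  rfl

lemma epairs_union_right (A : Finset V) {B B' : Finset V} (h : Disjoint B B') :
    epairs G A (B ∪ B') = epairs G A B + epairs G A B' := by
  rw [epairs_comm, epairs_union_left h, epairs_comm B, epairs_comm B']

lemma epairs_eq_sum (A B : Finset V) : epairs G A B = ∑ a ∈ A, #{b ∈ B | G.Adj a b} := by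
  simp only [epairs, card_filter, sum_product]

lemma epairs_eq_zero {A B : Finset V} (h : ∀ a ∈ A, ∀ b ∈ B, ¬G.Adj a b) : epairs G A B = 0 := by
  simp only [epairs_eq_sum, sum_eq_zero_iff, card_eq_zero, filter_eq_empty_iff]
  exact h

lemma epairs_singleton_left (u : V) (B : Finset V) : epairs G {u} B = #{b ∈ B | G.Adj u b} := by
  rw [epairs_eq_sum, sum_singleton]

lemma epairs_self_le (S : Finset V) : epairs G S S ≤ #S * (#S - 1) := by
  rw [epairs_eq_sum, ← smul_eq_mul]
  refine sum_le_card_nsmul _ _ _ fun u hu => ?_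
  rw [← card_erase_of_mem hu]
  exact card_le_card fun w hw => by
    rw [mem_filter] at hw
    exact mem_erase.mpr ⟨hw.2.ne', hw.1⟩

lemma epairs_eq_epairs_erase_add {S : Finset V} {u : V} (hu : u ∈ S) :
    epairs G S S = epairs G (S.erase u) (S.erase u) + 2 * #{w ∈ S | G.Adj u w} := by
  have hdisj : Disjoint {u} (S.erase u) := disjoint_singleton_left.mpr (notMem_erase u S)
  have hdeg : epairs G {u} (S.erase u) = #{w ∈ S | G.Adj u w} := by
    rw [epairs_singleton_left, filter_erase, erase_eq_of_notMem (by simp)]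
  conv_lhs => rw [← insert_erase hu, insert_eq]
  rw [epairs_union_left hdisj, epairs_union_right _ hdisj, epairs_union_right _ hdisj,
    epairs_comm (S.erase u), hdeg, epairs_eq_zero (by simp)]
  ring

lemma epairs_eq_add_of_closed {C S : Finset V} (hCS : C ⊆ S)
    (hC : ∀ a ∈ C, ∀ b ∈ S, G.Adj a b → b ∈ C) :
    epairs G S S = epairs G C C + epairs G (S \ C) (S \ C) := by
  have hdisj : Disjoint C (S \ C) := disjoint_sdiff
  have hcross : epairs G C (S \ C) = 0 :=
    epairs_eq_zero fun a ha b hb hab => (mem_sdiff.mp hb).2 (hC a ha b (mem_sdiff.mp hb).1 hab)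
  conv_lhs => rw [← union_sdiff_of_subset hCS]
  rw [epairs_union_left hdisj, epairs_union_right _ hdisj, epairs_union_right _ hdisj,
    epairs_comm (S \ C), hcross]
  ring

end epairs

namespace SimpleGraph.Walk

variable {V : Type*} {G : SimpleGraph V}

lemma IsPath.isCycle_cons_concat {v a b : V} {p : G.Walk a b} (hp : p.IsPath)
    (hlen : p.length ≠ 0) (hadj : ∀ x ∈ p.support, G.Adj v x) :
    (cons (hadj a p.start_mem_support) (p.concat (hadj b p.end_mem_support).symm)).IsCycle := by
  have hv : v ∉ p.support := fun h => G.irrefl (hadj v h)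
  have hq := hp.concat hv (hadj b p.end_mem_support).symm
  refine (cons_isCycle_iff _ _).mpr ⟨hq, fun he => ?_⟩
  have := hq.length_eq_one_of_mem_edges (Sym2.eq_swap ▸ he)
  rw [length_concat] at this
  omega

lemma IsPath.exists_isCycle_of_crossing {x y : V} {p : G.Walk x y} (hp : p.IsPath)
    (hlen : 2 ≤ p.length) {i : ℕ} (hi : i < p.length) (hx : G.Adj x (p.getVert (i + 1)))
    (hy : G.Adj y (p.getVert i)) :
    ∃ c : G.Walk x x, c.IsCycle ∧ c.length = p.length + 1 ∧ ∀ z ∈ c.support, z ∈ p.support := by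
  set r := p.take i
  set s := p.drop (i + 1)
  have hr : r.support = p.support.take (i + 1) := support_take p i
  have hs : s.support = p.support.drop (i + 1) := by
    rw [drop_support_eq_support_drop_min, min_eq_left hi]
  have hrs : r.support.Disjoint s.support := by
    rw [hr, hs]; exact List.disjoint_take_drop hp.support_nodup le_rfl
  have hP : (cons hx s).IsPath :=
    (cons_isPath_iff _ _).mpr ⟨hp.drop _, fun h => hrs r.start_mem_support h⟩
  have hQ : (cons hy r.reverse).IsPath :=
    (cons_isPath_iff _ _).mpr ⟨(hp.take _).reverse,
      fun h => hrs (by simpa using h) s.end_mem_support⟩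
  refine ⟨_, hP.isCycle_append hQ ?_ ?_, ?_, ?_⟩
  · simp only [support_cons, List.tail_cons, support_reverse]
    exact fun z hzs hzr => hrs (List.mem_reverse.mp hzr) hzs
  · simp only [length_cons, length_reverse, s, r, drop_length, take_length]
    omega
  · simp only [length_append, length_cons, length_reverse, s, r, drop_length, take_length]
    omega
  · intro z hz
    simp only [mem_support_append_iff, support_cons, List.mem_cons, support_reverse,
      List.mem_reverse, hr, hs] at hz
    rcases hz with (rfl | hz) | (rfl | hz)
    exacts [p.start_mem_support, List.mem_of_mem_drop hz, p.end_mem_support,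
      List.mem_of_mem_take hz]

variable [DecidableEq V]

lemma IsCycle.exists_isPath_concat {u w z : V} {c : G.Walk u u} (hc : c.IsCycle)
    (hw : w ∈ c.support) (hwz : G.Adj w z) (hz : z ∉ c.support) :
    ∃ (a : V) (q : G.Walk a z), q.IsPath ∧ q.length = c.length ∧
      ∀ x ∈ q.support, x = z ∨ x ∈ c.support := by
  set t := (c.rotate w hw).tail
  have ht : ∀ x ∈ t.support, x ∈ c.support := fun x hx => by
    rw [support_tail_of_not_nil _ (hc.rotate hw).not_nil] at hx
    exact (mem_support_rotate_iff c w hw).mp (List.mem_of_mem_tail hx)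
  refine ⟨_, t.concat hwz, (hc.rotate hw).isPath_tail.concat (fun h => hz (ht z h)) hwz, ?_, ?_⟩
  · have := hc.three_le_length
    rw [length_concat, length_tail, length_rotate]
    omega
  · intro x hx
    rw [support_concat, List.mem_append, List.mem_singleton] at hx
    exact hx.elim (fun h => Or.inr (ht x h)) Or.inl

variable [DecidableRel G.Adj]

lemma exists_crossing {x y : V} (p : G.Walk x y) {S : Finset V}
    (hx : ∀ z ∈ S, G.Adj x z → z ∈ p.support) (hy : ∀ z ∈ S, G.Adj y z → z ∈ p.support)
    (hdeg : p.length < #{z ∈ S | G.Adj x z} + #{z ∈ S | G.Adj y z}) :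
    ∃ i < p.length, G.Adj x (p.getVert (i + 1)) ∧ G.Adj y (p.getVert i) := by
  set A := {i ∈ range p.length | G.Adj x (p.getVert (i + 1))}
  set B := {i ∈ range p.length | G.Adj y (p.getVert i)}
  have hA : #{z ∈ S | G.Adj x z} ≤ #A := by
    refine (card_le_card fun z hz => ?_).trans (card_image_le (f := fun i => p.getVert (i + 1)))
    rw [mem_filter] at hz
    obtain ⟨j, rfl, hj⟩ := mem_support_iff_exists_getVert.mp (hx z hz.1 hz.2)
    cases j with
    | zero => exact absurd hz.2 (by simp)
    | succ i => exact mem_image.mpr ⟨i, mem_filter.mpr ⟨mem_range.mpr (by omega), hz.2⟩, rfl⟩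
  have hB : #{z ∈ S | G.Adj y z} ≤ #B := by
    refine (card_le_card fun z hz => ?_).trans (card_image_le (f := p.getVert))
    rw [mem_filter] at hz
    obtain ⟨j, rfl, hj⟩ := mem_support_iff_exists_getVert.mp (hy z hz.1 hz.2)
    have hjL : j ≠ p.length := by rintro rfl; exact absurd hz.2 (by simp)
    exact mem_image.mpr ⟨j, mem_filter.mpr ⟨mem_range.mpr (by omega), hz.2⟩, rfl⟩
  obtain ⟨i, hi⟩ := inter_nonempty_of_card_lt_card_add_card (filter_subset _ _) (filter_subset _ _)
    (by rw [card_range]; omega : #(range p.length) < #A + #B)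
  simp only [mem_inter, mem_filter, mem_range] at hi
  exact ⟨i, hi.1.1, hi.1.2, hi.2.2⟩

end SimpleGraph.Walk

namespace SimpleGraph

variable {V : Type*} {G : SimpleGraph V}

lemma Walk.IsPath.length_lt_card {S : Finset V} {a b : V} {p : G.Walk a b} (hp : p.IsPath)
    (hpS : ∀ x ∈ p.support, x ∈ S) : p.length < #S := by
  classical
  have := card_le_card (s := p.support.toFinset) fun x hx => hpS x (List.mem_toFinset.mp hx)
  rw [List.toFinset_card_of_nodup hp.support_nodup, Walk.length_support] at this
  omega

lemma exists_isPath_forall_length_le (S : Finset V) (hS : S.Nonempty) :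
    ∃ (a b : V) (p : G.Walk a b), p.IsPath ∧ (∀ x ∈ p.support, x ∈ S) ∧
      ∀ (a' b' : V) (q : G.Walk a' b'), q.IsPath → (∀ x ∈ q.support, x ∈ S) →
        q.length ≤ p.length := by
  classical
  let P (n : ℕ) := ∃ (a b : V) (p : G.Walk a b), p.IsPath ∧ (∀ x ∈ p.support, x ∈ S) ∧
    p.length = n
  obtain ⟨u, hu⟩ := hS
  obtain ⟨a, b, p, hp, hpS, hpL⟩ :=
    Nat.findGreatest_spec (P := P) (Nat.zero_le #S) ⟨u, u, .nil, .nil, by simpa using hu, rfl⟩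
  refine ⟨a, b, p, hp, hpS, fun a' b' q hq hqS => hpL ▸ ?_⟩
  exact Nat.le_findGreatest (hq.length_lt_card hqS).le ⟨a', b', q, hq, hqS, rfl⟩

lemma Walk.mem_support_of_forall_length_le {S : Finset V} {x y z : V} {p : G.Walk x y}
    (hp : p.IsPath) (hpS : ∀ w ∈ p.support, w ∈ S)
    (hmax : ∀ (a b : V) (q : G.Walk a b), q.IsPath → (∀ w ∈ q.support, w ∈ S) →
      q.length ≤ p.length)
    (hz : z ∈ S) (hyz : G.Adj y z) : z ∈ p.support := by
  by_contra h
  have := hmax _ _ _ (hp.concat h hyz) fun w hw => by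
    rw [Walk.support_concat, List.mem_append, List.mem_singleton] at hw
    exact hw.elim (hpS w) (· ▸ hz)
  rw [Walk.length_concat] at this
  omega

lemma exists_closed_ssubset_or_connected (S : Finset V) {u : V} (hu : u ∈ S) :
    (∃ C : Finset V, C.Nonempty ∧ C ⊂ S ∧ ∀ a ∈ C, ∀ b ∈ S, G.Adj a b → b ∈ C) ∨
      ∀ a ∈ S, ∀ b ∈ S, ∃ q : G.Walk a b, ∀ x ∈ q.support, x ∈ S := by
  classical
  set C := {w ∈ S | ∃ q : G.Walk u w, ∀ x ∈ q.support, x ∈ S}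
  by_cases hCS : C = S
  · right
    intro a ha b hb
    obtain ⟨-, qa, hqa⟩ := mem_filter.mp (hCS ▸ ha : a ∈ C)
    obtain ⟨-, qb, hqb⟩ := mem_filter.mp (hCS ▸ hb : b ∈ C)
    refine ⟨qa.reverse.append qb, fun x hx => ?_⟩
    rw [Walk.mem_support_append_iff, Walk.support_reverse, List.mem_reverse] at hx
    exact hx.elim (hqa x) (hqb x)
  · left
    refine ⟨C, ⟨u, mem_filter.mpr ⟨hu, .nil, by simpa using hu⟩⟩,
      ssubset_of_subset_of_ne (filter_subset _ _) hCS, fun a ha b hb hab => ?_⟩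
    obtain ⟨-, q, hq⟩ := mem_filter.mp ha
    refine mem_filter.mpr ⟨hb, q.concat hab, fun x hx => ?_⟩
    rw [Walk.support_concat, List.mem_append, List.mem_singleton] at hx
    exact hx.elim (hq x) (· ▸ hb)

variable [DecidableEq V] [DecidableRel G.Adj]

theorem exists_isPath_min_le_length {S : Finset V}
    (hconn : ∀ a ∈ S, ∀ b ∈ S, ∃ q : G.Walk a b, ∀ x ∈ q.support, x ∈ S) {δ : ℕ} (hδ : 2 ≤ δ)
    (hdeg : ∀ u ∈ S, δ ≤ #{w ∈ S | G.Adj u w}) (hS : S.Nonempty) :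
    ∃ (a b : V) (p : G.Walk a b), p.IsPath ∧ (∀ x ∈ p.support, x ∈ S) ∧
      min (2 * δ) (#S - 1) ≤ p.length := by
  obtain ⟨x, y, p, hp, hpS, hmax⟩ := exists_isPath_forall_length_le (G := G) S hS
  refine ⟨x, y, p, hp, hpS, ?_⟩
  by_contra! hshort
  have hxS : x ∈ S := hpS x p.start_mem_support
  have hyS : y ∈ S := hpS y p.end_mem_support
  have hcard : #p.support.toFinset = p.length + 1 := by
    rw [List.toFinset_card_of_nodup hp.support_nodup, Walk.length_support]
  have hNy : ∀ z ∈ S, G.Adj y z → z ∈ p.support := fun z hz =>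
    p.mem_support_of_forall_length_le hp hpS hmax hz
  have hNx : ∀ z ∈ S, G.Adj x z → z ∈ p.support := fun z hz hxz => by
    simpa using p.reverse.mem_support_of_forall_length_le hp.reverse (by simpa using hpS)
      (by simpa using hmax) hz hxz
  have hδL : δ ≤ p.length := by
    refine (hdeg y hyS).trans ?_
    calc #{w ∈ S | G.Adj y w} ≤ #(p.support.toFinset.erase y) := card_le_card fun w hw => by
          rw [mem_filter] at hw
          exact mem_erase.mpr ⟨hw.2.ne', List.mem_toFinset.mpr (hNy w hw.1 hw.2)⟩
      _ = p.length := by rw [card_erase_of_mem (by simp), hcard]; rfl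
  obtain ⟨i, hi, hxi, hyi⟩ :=
    p.exists_crossing hNx hNy (by have := hdeg x hxS; have := hdeg y hyS; omega)
  obtain ⟨c, hc, hcL, hcp⟩ := hp.exists_isCycle_of_crossing (by omega) hi hxi hyi
  obtain ⟨w, hwS, hwp⟩ : ∃ w ∈ S, w ∉ p.support := by
    by_contra! h
    have := card_le_card fun w hw => List.mem_toFinset.mpr (h w hw)
    omega
  obtain ⟨q, hqS⟩ := hconn x hxS w hwS
  obtain ⟨d, hd, hd₁, hd₂⟩ :=
    q.exists_boundary_dart {v | v ∈ c.support} c.start_mem_support fun h => hwp (hcp w h)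
  obtain ⟨a, q', hq', hq'L, hq'S⟩ := hc.exists_isPath_concat hd₁ d.adj hd₂
  have := hmax a _ q' hq' fun v hv => (hq'S v hv).elim
    (fun h => h ▸ hqS _ (q.dart_snd_mem_support_of_mem_darts hd)) fun h => hpS v (hcp v h)
  omega

theorem epairs_le_of_forall_isPath_length_lt {ℓ : ℕ} (S : Finset V)
    (hS : ∀ (a b : V) (p : G.Walk a b), p.IsPath → (∀ x ∈ p.support, x ∈ S) → p.length < ℓ) :
    epairs G S S ≤ (ℓ + 2) * #S := by
  induction S using Finset.strongInduction with
  | H S ih =>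
  have ih' (T : Finset V) (hT : T ⊂ S) : epairs G T T ≤ (ℓ + 2) * #T :=
    ih T hT fun a b p hp hpT => hS a b p hp fun x hx => hT.subset (hpT x hx)
  by_cases hsmall : #S ≤ ℓ + 3
  · calc epairs G S S ≤ #S * (#S - 1) := epairs_self_le S
      _ ≤ (ℓ + 2) * #S := by rw [mul_comm]; gcongr; omega
  by_cases hlow : ∃ u ∈ S, 2 * #{w ∈ S | G.Adj u w} ≤ ℓ + 2
  · obtain ⟨u, hu, hdeg⟩ := hlow
    have h := ih' _ (erase_ssubset hu)
    rw [card_erase_of_mem hu] at h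
    rw [epairs_eq_epairs_erase_add hu]
    calc _ ≤ (ℓ + 2) * (#S - 1) + (ℓ + 2) := by omega
      _ = (ℓ + 2) * #S := by rw [← Nat.mul_succ]; congr 1; omega
  push Not at hlow
  obtain ⟨u, hu⟩ : S.Nonempty := by rw [← card_pos]; omega
  rcases exists_closed_ssubset_or_connected (G := G) S hu with ⟨C, hCne, hCS, hC⟩ | hconn
  · rw [epairs_eq_add_of_closed hCS.subset hC, ← card_sdiff_add_card_eq_card hCS.subset,
      mul_add, add_comm]
    exact add_le_add (ih' _ (sdiff_ssubset hCS.subset hCne)) (ih' C hCS)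
  · obtain ⟨a, b, p, hp, hpS, hlen⟩ := exists_isPath_min_le_length hconn (δ := ℓ / 2 + 2)
      (by omega) (fun u hu => by have := hlow u hu; omega) ⟨u, hu⟩
    have := hS a b p hp hpS
    omega

end SimpleGraph

/-- If `k ≥ 2` and `G` contains no cycle of length `2k`, then for every vertex `v`,
the subgraph induced on `N(v)` contains no path with `2k−2` edges, and consequently
`e(G[N(v)]) ≤ k·d(v)` (stated as `2·e(G[N(v)]) ≤ 2·k·d(v)` via ordered pairs). -/
theorem stmt_7 {V : Type*} [Fintype V] [DecidableEq V]
    (G : SimpleGraph V) [DecidableRel G.Adj] (k : ℕ) (hk : 2 ≤ k)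
    (hfree : ∀ (w : V) (c : G.Walk w w), c.IsCycle → c.length ≠ 2 * k)
    (v : V) :
    (∀ (a b : V) (p : G.Walk a b), p.IsPath →
        (∀ x ∈ p.support, G.Adj v x) → p.length ≠ 2 * k - 2) ∧
    epairs G (G.neighborFinset v) (G.neighborFinset v) ≤ 2 * k * G.degree v := by
  have hno (a b : V) (p : G.Walk a b) (hp : p.IsPath) (hadj : ∀ x ∈ p.support, G.Adj v x) :
      p.length ≠ 2 * k - 2 := fun hlen => by
    refine hfree v _ (hp.isCycle_cons_concat (by omega) hadj) ?_
    rw [Walk.length_cons, Walk.length_concat]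
    omega
  refine ⟨hno, ?_⟩
  have hshort (a b : V) (p : G.Walk a b) (hp : p.IsPath)
      (hpN : ∀ x ∈ p.support, x ∈ G.neighborFinset v) : p.length < 2 * k - 2 := by
    by_contra! hlong
    refine hno a _ (p.take (2 * k - 2)) (hp.take _) (fun x hx => ?_) (by simp; omega)
    rw [Walk.support_take] at hx
    exact (mem_neighborFinset ..).mp (hpN x (List.mem_of_mem_take hx))
  have h := epairs_le_of_forall_isPath_length_lt _ hshort
  rwa [card_neighborFinset_eq_degree, show 2 * k - 2 + 2 = 2 * k by omega] at h
end

section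
/- Let k ≥ 2 and let G be a C_{2k}-free graph on n vertices. Then the set S of vertices of degree at least (1 − 1/(2k))·n has size at most k − 1. -/
/-!
If `k` vertices each miss at most `n/(2k)` vertices, their common neighbourhood has at least
`n/2 ≥ k` vertices, so `G` contains `K_{k,k}`, and `K_{k,k}` contains a `2k`-cycle
(alternate between the two sides).
-/

open Finset SimpleGraph

namespace SimpleGraph

theorem cycleGraph_two_mul_isContained_completeBipartiteGraph (k : ℕ) :
    cycleGraph (2 * k) ⊑ completeBipartiteGraph (Fin k) (Fin k) := by
  let f : Fin (2 * k) → Fin k ⊕ Fin k := fun i =>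
    if i.val % 2 = 0 then .inl ⟨i / 2, by omega⟩ else .inr ⟨i / 2, by omega⟩
  have hf : f.Injective := by
    intro i j hij
    simp only [f] at hij
    split_ifs at hij <;> simp [Fin.ext_iff] at hij ⊢ <;> omega
  have hparity {i j : Fin (2 * k)} (hij : (i - j).val = 1) : i.val % 2 ≠ j.val % 2 := by
    rcases le_or_gt j i with h | h
    · rw [Fin.coe_sub_iff_le.mpr h] at hij; omega
    · rw [Fin.coe_sub_iff_lt.mpr h] at hij; omega
  refine ⟨⟨⟨f, fun {i j} hij => ?_⟩, hf⟩⟩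
  have hne : i.val % 2 ≠ j.val % 2 := (cycleGraph_adj'.mp hij).elim hparity (hparity · |>.symm)
  simp only [f]
  split_ifs <;> simp_all

variable {V : Type*} [Fintype V] [DecidableEq V] {G : SimpleGraph V} [DecidableRel G.Adj]

theorem card_le_card_inf_neighborFinset_add_sum (A : Finset V) :
    Fintype.card V ≤
      #(A.inf (G.neighborFinset ·)) + ∑ a ∈ A, (Fintype.card V - G.degree a) := by
  have hcompl :
      #(A.inf (G.neighborFinset ·))ᶜ ≤ ∑ a ∈ A, (Fintype.card V - G.degree a) := by
    rw [Finset.compl_inf, sup_eq_biUnion]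
    refine card_biUnion_le.trans (sum_le_sum fun a _ => ?_)
    rw [card_compl, card_neighborFinset_eq_degree]
  have := card_compl (A.inf (G.neighborFinset ·))
  have := card_le_univ (A.inf (G.neighborFinset ·))
  omega

theorem isCompleteBetween_inf_neighborFinset (A : Finset V) :
    G.IsCompleteBetween A ↑(A.inf (G.neighborFinset ·)) := by
  intro a ha x hx
  simp only [mem_coe, mem_inf, mem_neighborFinset] at hx
  exact hx a ha

theorem card_div_two_le_card_inf_neighborFinset {k : ℕ} (A : Finset V) (hA : #A ≤ k)
    (hdeg : ∀ a ∈ A, (1 - 1 / (2 * (k : ℝ))) * Fintype.card V ≤ G.degree a) :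
    (Fintype.card V : ℝ) / 2 ≤ #(A.inf (G.neighborFinset ·)) := by
  set n := Fintype.card V
  have hmissing : ∀ a ∈ A, ((n - G.degree a : ℕ) : ℝ) ≤ n / (2 * k) := fun a ha => by
    have hdeg_le : G.degree a ≤ n := (G.degree_lt_card_verts a).le
    rw [Nat.cast_sub hdeg_le]
    linarith [hdeg a ha, show (1 - 1 / (2 * (k : ℝ))) * n = n - n / (2 * k) by ring]
  have hsum : ((∑ a ∈ A, (n - G.degree a) : ℕ) : ℝ) ≤ n / 2 := calc
    _ ≤ ∑ _a ∈ A, (n : ℝ) / (2 * k) := by push_cast; exact sum_le_sum hmissing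
    _ = #A * (n / (2 * k)) := by rw [sum_const, nsmul_eq_mul]
    _ ≤ k * (n / (2 * k)) := by gcongr
    _ ≤ n / 2 := by
      rcases eq_or_ne k 0 with rfl | hk
      · simp only [CharP.cast_eq_zero, zero_mul]; positivity
      · field_simp; rfl
  have hcover :
      (n : ℝ) ≤ #(A.inf (G.neighborFinset ·)) + (∑ a ∈ A, (n - G.degree a) : ℕ) :=
    mod_cast card_le_card_inf_neighborFinset_add_sum A
  linarith

end SimpleGraph

/-- Let `k ≥ 2`, `n ≥ 4k`, and let `G` be an `n`-vertex graph with no cycle of length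
`2k`. Then the set of vertices of degree at least `(1 − 1/(2k))·n` has size at most
`k − 1`. -/
theorem stmt_10 {V : Type*} [Fintype V] [DecidableEq V]
    (G : SimpleGraph V) [DecidableRel G.Adj] (k : ℕ) (hk : 2 ≤ k)
    (hn : 4 * k ≤ Fintype.card V)
    (hfree : ∀ (w : V) (c : G.Walk w w), c.IsCycle → c.length ≠ 2 * k) :
    (Finset.univ.filter fun v : V =>
        (1 - 1 / (2 * (k : ℝ))) * (Fintype.card V : ℝ) ≤ (G.degree v : ℝ)).card
      ≤ k - 1 := by
  set S := univ.filter fun v : V =>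
    (1 - 1 / (2 * (k : ℝ))) * (Fintype.card V : ℝ) ≤ (G.degree v : ℝ)
  by_contra! hS
  obtain ⟨A, hAS, hA⟩ := exists_subset_card_eq (show k ≤ #S by omega)
  have hcommon : k ≤ #(A.inf (G.neighborFinset ·)) := by
    have hhalf := card_div_two_le_card_inf_neighborFinset A hA.le
      fun a ha => (mem_filter.mp (hAS ha)).2
    have hnR : (4 * k : ℝ) ≤ Fintype.card V := by exact_mod_cast hn
    exact_mod_cast (show (k : ℝ) ≤ #(A.inf (G.neighborFinset ·)) by linarith)
  obtain ⟨B, hBA, hB⟩ := exists_subset_card_eq hcommon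
  have hKkk : completeBipartiteGraph (Fin k) (Fin k) ⊑ G :=
    completeBipartiteGraph_isContained_iff.mpr ⟨A, B, by simpa, by simpa,
      fun a ha b hb => isCompleteBetween_inf_neighborFinset A ha (hBA hb)⟩
  obtain ⟨w, c, hc, hlen⟩ := (cycleGraph_isContained_iff (by omega)).mp
    ((cycleGraph_two_mul_isContained_completeBipartiteGraph k).trans hKkk)
  exact hfree w c hc hlen
end
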